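/- arXiv:2011.03185 — 3 statements merged into one kernel-verified Lean document; each statement's English description precedes it below -/
import Mathlib

section
/- For real numbers a < 0, N ≥ 1 a natural number, the iterated integral ∫₀^{s_N} ⋯ ∫₀^{s₂} ∫₀^{s₁} e^{a(−N s₀ + s₁ + s₂ + ⋯ + s_N)} ds₀ ds₁ ⋯ ds_{N−1} equals (e^{a s_N} − 1)^N / (N! a^N). -/
/-- The iterated integral
`∫₀^{s} ⋯ ∫₀^{s₂} ∫₀^{s₁} e^{a(−N s₀ + s₁ + ⋯ + s_{N-1})} ds₀ ⋯ ds_{N−1}`,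
as a function of the outer variable `s`: `iterInt a N k s` performs `k+1` nested
integrals, where the innermost integrand is `e^{−N a s₀}` and each subsequent
level multiplies by `e^{a s_i}`. -/
noncomputable def iterInt (a : ℝ) (N : ℕ) : ℕ → ℝ → ℝ
  | 0, s => ∫ s0 in (0:ℝ)..s, Real.exp (-(N : ℝ) * a * s0)
  | (k + 1), s => ∫ x in (0:ℝ)..s, Real.exp (a * x) * iterInt a N k x

/-! Write `T g (s) = ∫₀ˢ e^{ax} g(x) dx`, a linear operator on `C(ℝ, ℝ)`. The iterated integral is
`T^N` applied to `x ↦ e^{-(N+1)ax}`, and `T` sends `e^{cx}` to `(e^{(a+c)s} - 1)/(a+c)`, so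
`T^{N+1} e^{-(N+2)ax} = (T^N 1 - T^N e^{-(N+1)ax}) / ((N+1)a)`. Together with
`T^N 1 = (e^{as} - 1)^N / (N! a^N)` this gives the claim by induction on `N`. -/

open Real
open scoped Nat

noncomputable def expMulMap (c : ℝ) : C(ℝ, ℝ) := ⟨fun x => exp (c * x), by fun_prop⟩

@[simp]
lemma expMulMap_apply (c x : ℝ) : expMulMap c x = exp (c * x) := rfl

noncomputable def expWeightedPrimitive (a : ℝ) : C(ℝ, ℝ) →ₗ[ℝ] C(ℝ, ℝ) where
  toFun g := ⟨fun s => ∫ x in (0 : ℝ)..s, exp (a * x) * g x,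
    intervalIntegral.continuous_primitive (fun _ _ =>
      (by fun_prop : Continuous fun x => exp (a * x) * g x).intervalIntegrable _ _) 0⟩
  map_add' g h := by
    ext s
    simp only [ContinuousMap.add_apply, ContinuousMap.coe_mk, mul_add]
    exact intervalIntegral.integral_add ((by fun_prop : Continuous _).intervalIntegrable _ _)
      ((by fun_prop : Continuous _).intervalIntegrable _ _)
  map_smul' c g := by
    ext s
    simp only [ContinuousMap.smul_apply, ContinuousMap.coe_mk, smul_eq_mul, RingHom.id_apply,
      mul_left_comm _ c, intervalIntegral.integral_const_mul]

lemma expWeightedPrimitive_apply (a : ℝ) (g : C(ℝ, ℝ)) (s : ℝ) :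
    expWeightedPrimitive a g s = ∫ x in (0 : ℝ)..s, exp (a * x) * g x := rfl

lemma integral_exp_mul {c : ℝ} (hc : c ≠ 0) (s : ℝ) :
    ∫ x in (0 : ℝ)..s, exp (c * x) = c⁻¹ * (exp (c * s) - 1) := by
  rw [intervalIntegral.integral_comp_mul_left exp hc, integral_exp, mul_zero, exp_zero,
    smul_eq_mul]

lemma iterInt_eq_expWeightedPrimitive_pow (a : ℝ) (N k : ℕ) :
    iterInt a N k = (expWeightedPrimitive a ^ (k + 1)) (expMulMap (-(N + 1) * a)) := by
  induction k with
  | zero =>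
    ext s
    simp only [iterInt, zero_add, pow_one, expWeightedPrimitive_apply, expMulMap_apply, ← exp_add]
    congr 1; ext x; ring_nf
  | succ k ih =>
    ext s
    rw [pow_succ', Module.End.mul_apply, expWeightedPrimitive_apply, ← ih]
    rfl

lemma expWeightedPrimitive_expMulMap {a c : ℝ} (h : a + c ≠ 0) :
    expWeightedPrimitive a (expMulMap c) = (a + c)⁻¹ • (expMulMap (a + c) - 1) := by
  ext s
  simp only [expWeightedPrimitive_apply, expMulMap_apply, ← exp_add, ← add_mul,
    integral_exp_mul h, ContinuousMap.smul_apply, ContinuousMap.sub_apply,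
    ContinuousMap.one_apply, smul_eq_mul]

lemma expWeightedPrimitive_pow_one {a : ℝ} (ha : a ≠ 0) (m : ℕ) :
    ⇑((expWeightedPrimitive a ^ m) 1) = fun s => (exp (a * s) - 1) ^ m / (m ! * a ^ m) := by
  induction m with
  | zero => ext; simp
  | succ m ih =>
    ext s
    rw [pow_succ', Module.End.mul_apply, expWeightedPrimitive_apply, ih]
    have hderiv : ∀ x,
        HasDerivAt (fun s => (exp (a * s) - 1) ^ (m + 1) / ((m + 1) ! * a ^ (m + 1)))
          (exp (a * x) * ((exp (a * x) - 1) ^ m / (m ! * a ^ m))) x := by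
      intro x
      refine ((((hasDerivAt_id x).const_mul a).exp.sub_const 1).pow (m + 1)).div_const
        ((m + 1) ! * a ^ (m + 1)) |>.congr_deriv ?_
      rw [Nat.factorial_succ, id]; push_cast; field_simp; ring
    rw [intervalIntegral.integral_eq_sub_of_hasDerivAt (fun x _ => hderiv x)
      (by apply Continuous.intervalIntegrable; fun_prop)]
    simp

lemma exp_mul_expWeightedPrimitive_pow_expMulMap {a : ℝ} (ha : a ≠ 0) (m : ℕ) (s : ℝ) :
    exp (a * s) * (expWeightedPrimitive a ^ m) (expMulMap (-(m + 1) * a)) s =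
      (exp (a * s) - 1) ^ m / (m ! * a ^ m) := by
  induction m generalizing s with
  | zero => simp [← exp_add]
  | succ m ih =>
    have hc : a + -(((m + 1 : ℕ) : ℝ) + 1) * a = -((m : ℝ) + 1) * a := by push_cast; ring
    have hc0 : -((m : ℝ) + 1) * a ≠ 0 := mul_ne_zero (neg_ne_zero.mpr m.cast_add_one_ne_zero) ha
    rw [pow_succ, Module.End.mul_apply, expWeightedPrimitive_expMulMap (hc ▸ hc0), hc, map_smul,
      map_sub, ContinuousMap.smul_apply, ContinuousMap.sub_apply, smul_eq_mul, mul_left_comm,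
      mul_sub, ih, expWeightedPrimitive_pow_one ha, Nat.factorial_succ]
    push_cast
    field_simp
    ring

theorem iterated_simplex_integral_exp_general (a : ℝ) (N : ℕ) (sN : ℝ)
    (ha : a < 0) (hN : 1 ≤ N) :
    Real.exp (a * sN) * iterInt a N (N - 1) sN =
      (Real.exp (a * sN) - 1) ^ N / ((N.factorial : ℝ) * a ^ N) := by
  rw [iterInt_eq_expWeightedPrimitive_pow, Nat.sub_add_cancel hN]
  exact exp_mul_expWeightedPrimitive_pow_expMulMap ha.ne N sN

/-- For `a < 0` and `N ≥ 1`, the iterated simplex integral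
`∫₀^{s_N} ⋯ ∫₀^{s₂} ∫₀^{s₁} e^{a(−N s₀ + s₁ + s₂ + ⋯ + s_N)} ds₀ ds₁ ⋯ ds_{N−1}`
(the factor `e^{a s_N}` of the integrand is constant in the integration variables)
equals `(e^{a s_N} − 1)^N / (N! a^N)`. -/
theorem iterated_simplex_integral_exp (a : ℝ) (N : ℕ) (sN : ℝ)
    (ha : a < 0) (hN : 1 ≤ N) (hs : 0 ≤ sN) :
    Real.exp (a * sN) * iterInt a N (N - 1) sN =
      (Real.exp (a * sN) - 1) ^ N / ((N.factorial : ℝ) * a ^ N) :=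
  iterated_simplex_integral_exp_general a N sN ha hN
end

section
/- Let h > 0, N ≥ 1, and let λ < 0, J ≥ 0, b ≥ 0 satisfy b < |λ| and h ≤ 2(|λ| − b)/(N(|λ|² − b² + J²)) and N h |λ| ≤ 1. Then for every j ∈ {1,…,N}: √(1 − 2 j h |λ| + j² h² (|λ|² + J²)) ≤ 1 − j h b; in particular √(1 − 2 N h |λ| + N² h² (λ² + J²)) + N h b ≤ 1. -/
/-- Let `h > 0`, `N ≥ 1`, `λ < 0`, `J ≥ 0`, `b ≥ 0` with `b < |λ|`,
`h ≤ 2(|λ| − b)/(N(|λ|² − b² + J²))`, and `N h |λ| ≤ 1`. Then for every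
`j ∈ {1,…,N}`, `√(1 − 2jh|λ| + j²h²(|λ|² + J²)) ≤ 1 − jhb`; in particular
`√(1 − 2Nh|λ| + N²h²(λ² + J²)) + Nhb ≤ 1`. -/
theorem euler_step_stability (lam J b h : ℝ) (N : ℕ)
    (hlam : lam < 0) (hJ : 0 ≤ J) (hb : 0 ≤ b) (hblam : b < |lam|)
    (hN : 1 ≤ N) (hh : 0 < h)
    (hh1 : h ≤ 2 * (|lam| - b) / (N * (|lam| ^ 2 - b ^ 2 + J ^ 2)))
    (hh2 : (N : ℝ) * h * |lam| ≤ 1) :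
    (∀ j : ℕ, 1 ≤ j → j ≤ N →
        Real.sqrt (1 - 2 * j * h * |lam| + j ^ 2 * h ^ 2 * (|lam| ^ 2 + J ^ 2))
          ≤ 1 - j * h * b) ∧
      Real.sqrt (1 - 2 * N * h * |lam| + N ^ 2 * h ^ 2 * (lam ^ 2 + J ^ 2))
          + N * h * b ≤ 1 := by
  have hNR : (1:ℝ) ≤ (N:ℝ) := by exact_mod_cast hN
  have hD : 0 < |lam| ^ 2 - b ^ 2 + J ^ 2 := by nlinarith
  have hND : (N:ℝ) * h * (|lam| ^ 2 - b ^ 2 + J ^ 2) ≤ 2 * (|lam| - b) := by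
    have hpos : 0 < (N:ℝ) * (|lam| ^ 2 - b ^ 2 + J ^ 2) := by positivity
    rw [le_div_iff₀ hpos] at hh1
    nlinarith
  have main : ∀ j : ℕ, 1 ≤ j → j ≤ N →
      Real.sqrt (1 - 2 * j * h * |lam| + j ^ 2 * h ^ 2 * (|lam| ^ 2 + J ^ 2))
        ≤ 1 - j * h * b := by
    intro j hj1 hjN
    have hjN' : (j:ℝ) ≤ (N:ℝ) := by exact_mod_cast hjN
    have hj1' : (1:ℝ) ≤ (j:ℝ) := by exact_mod_cast hj1
    have hbl : b ≤ |lam| := hblam.le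
    have hjb : (j:ℝ) * h * b ≤ 1 := by
      nlinarith [mul_nonneg (mul_nonneg (sub_nonneg.2 hjN') hh.le) hb,
        mul_nonneg (mul_nonneg (le_trans zero_le_one hNR) hh.le) (sub_nonneg.2 hbl)]
    have hr : 0 ≤ 1 - (j:ℝ) * h * b := by linarith
    have key : 1 - 2 * j * h * |lam| + j ^ 2 * h ^ 2 * (|lam| ^ 2 + J ^ 2)
        ≤ (1 - (j:ℝ) * h * b) ^ 2 := by
      have h1 : (j:ℝ) * h * (|lam| ^ 2 - b ^ 2 + J ^ 2) ≤ 2 * (|lam| - b) := by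
        nlinarith
      nlinarith [mul_nonneg (mul_nonneg (Nat.cast_nonneg j : (0:ℝ) ≤ j) hh.le) (sub_nonneg.2 h1)]
    calc Real.sqrt (1 - 2 * j * h * |lam| + j ^ 2 * h ^ 2 * (|lam| ^ 2 + J ^ 2))
        ≤ Real.sqrt ((1 - (j:ℝ) * h * b) ^ 2) := Real.sqrt_le_sqrt key
      _ = 1 - (j:ℝ) * h * b := by rw [Real.sqrt_sq hr]
  refine ⟨main, ?_⟩
  have := main N hN le_rfl
  have habs : |lam| ^ 2 = lam ^ 2 := sq_abs lam
  rw [habs] at this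
  linarith
end

section
/- Let L = Σ_{k=0}^{K} |k⟩⟨k| ⊗ I − Σ_{k=1}^{K} |k⟩⟨k−1| ⊗ M_k be a block lower bidiagonal matrix where each block M_k satisfies ‖M_k‖ ≤ 1. Then ‖L‖ ≤ 3 and ‖L⁻¹‖ ≤ K + 1, so the condition number κ(L) ≤ 3(K+1). -/
/-!
Write `L = 1 - N`, where `N` is the block shift carrying block `k - 1` to block `k` through
`M k`. Since the blocks are contractions and `N` maps distinct blocks to distinct blocks,
`‖N‖ ≤ 1`, so `‖L‖ ≤ 2`. Since `N ^ (K + 1) = 0`, `L⁻¹ = ∑_{j ≤ K} N ^ j` is a sum of `K + 1`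
contractions.
-/

open scoped Matrix.Norms.L2Operator Matrix
open Finset

namespace Matrix

variable {𝕜 m n : Type*} [RCLike 𝕜] [Fintype m] [Fintype n] [DecidableEq n]

theorem l2_opNorm_le_one_iff (A : Matrix m n 𝕜) :
    ‖A‖ ≤ 1 ↔ ∀ x : n → 𝕜, ∑ i, ‖(A *ᵥ x) i‖ ^ 2 ≤ ∑ j, ‖x j‖ ^ 2 := by
  rw [l2_opNorm_def, ContinuousLinearMap.opNorm_le_iff zero_le_one,
    (WithLp.equiv 2 (n → 𝕜)).symm.forall_congr_left]
  refine forall_congr' fun x => ?_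
  rw [one_mul, ← sq_le_sq₀ (norm_nonneg _) (norm_nonneg _), EuclideanSpace.norm_sq_eq,
    EuclideanSpace.norm_sq_eq]
  rfl

theorem l2_opNorm_one_le : ‖(1 : Matrix n n 𝕜)‖ ≤ 1 :=
  (l2_opNorm_le_one_iff (1 : Matrix n n 𝕜)).2 fun x => by rw [one_mulVec]

theorem inv_one_sub_eq_geom_sum {R : Type*} [CommRing R] {N : Matrix n n R} {k : ℕ}
    (hN : N ^ k = 0) : (1 - N)⁻¹ = ∑ j ∈ range k, N ^ j :=
  inv_eq_right_inv (by rw [mul_neg_geom_sum, hN, sub_zero])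

end Matrix

theorem norm_geom_sum_le_of_norm_le_one {R : Type*} [NormedRing R] {x : R} (h1 : ‖(1 : R)‖ ≤ 1)
    (hx : ‖x‖ ≤ 1) (n : ℕ) : ‖∑ j ∈ range n, x ^ j‖ ≤ n := by
  have hpow : ∀ j, ‖x ^ j‖ ≤ 1
    | 0 => by rwa [pow_zero]
    | j + 1 => (norm_pow_le' x j.succ_pos).trans (pow_le_one₀ (norm_nonneg x) hx)
  simpa using (norm_sum_le _ _).trans (sum_le_sum fun j (_ : j ∈ range n) => hpow j)

namespace Matrix

variable {α n : Type*} {K : ℕ}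

-- The index condition is read in `ℕ`: in `Fin K`, `q.1 + 1` would wrap around.
def blockShift [Zero α] (M : ℕ → Matrix n n α) : Matrix (Fin K × n) (Fin K × n) α :=
  of fun p q => if (p.1 : ℕ) = q.1 + 1 then M p.1 p.2 q.2 else 0

variable [Fintype n]

theorem blockShift_pow_apply_eq_zero [DecidableEq n] [Semiring α] (M : ℕ → Matrix n n α) {m : ℕ}
    {p q : Fin K × n} (hpq : (q.1 : ℕ) + m ≠ p.1) : (blockShift M ^ m) p q = 0 := by
  induction m generalizing p with
  | zero => exact one_apply_ne fun h => hpq (by simp [h])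
  | succ m ih =>
    rw [pow_succ', mul_apply]
    refine sum_eq_zero fun r _ => ?_
    by_cases hpr : (p.1 : ℕ) = r.1 + 1
    · rw [ih (by omega), mul_zero]
    · simp [blockShift, hpr]

theorem blockShift_pow_eq_zero [DecidableEq n] [Semiring α] (M : ℕ → Matrix n n α) :
    blockShift (K := K) M ^ K = 0 := by
  ext p q
  exact blockShift_pow_apply_eq_zero M (by omega)

theorem blockShift_mulVec_zero [NonUnitalNonAssocSemiring α] (M : ℕ → Matrix n n α)
    (x : Fin (K + 1) × n → α) (a : n) : (blockShift M *ᵥ x) (0, a) = 0 := by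
  simp [blockShift, mulVec, dotProduct]

theorem blockShift_mulVec_succ [NonUnitalNonAssocSemiring α] (M : ℕ → Matrix n n α)
    (x : Fin (K + 1) × n → α) (i : Fin K) (a : n) :
    (blockShift M *ᵥ x) (i.succ, a) = (M (i + 1) *ᵥ fun b => x (i.castSucc, b)) a := by
  simp only [mulVec, dotProduct, blockShift, of_apply, Fintype.sum_prod_type]
  rw [sum_eq_single i.castSucc]
  · simp
  · intro j _ hj
    have : (i : ℕ) ≠ j := fun h => hj (Fin.ext (by simpa using h.symm))
    simp [this]
  · simp

theorem norm_blockShift_le_one [DecidableEq n] {𝕜 : Type*} [RCLike 𝕜] {M : ℕ → Matrix n n 𝕜}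
    (hM : ∀ k, ‖M k‖ ≤ 1) : ‖blockShift (K := K) M‖ ≤ 1 := by
  rcases K with _ | K
  · simp [Subsingleton.elim (blockShift M) 0]
  refine (l2_opNorm_le_one_iff _).2 fun x => ?_
  calc ∑ p, ‖(blockShift M *ᵥ x) p‖ ^ 2
      = ∑ i : Fin K, ∑ a, ‖(M (i + 1) *ᵥ fun b => x (i.castSucc, b)) a‖ ^ 2 := by
        simp [Fintype.sum_prod_type, Fin.sum_univ_succ, blockShift_mulVec_zero,
          blockShift_mulVec_succ]
    _ ≤ ∑ i : Fin K, ∑ b, ‖x (i.castSucc, b)‖ ^ 2 :=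
        sum_le_sum fun i _ => (l2_opNorm_le_one_iff _).1 (hM _) _
    _ ≤ ∑ p, ‖x p‖ ^ 2 := by
        rw [Fintype.sum_prod_type, Fin.sum_univ_castSucc]
        exact le_add_of_nonneg_right (by positivity)

end Matrix

theorem block_bidiagonal_condition_number_general (K d : ℕ)
    (M : ℕ → Matrix (Fin d) (Fin d) ℂ) (hM : ∀ k, ‖M k‖ ≤ 1) :
    let L : Matrix (Fin (K + 1) × Fin d) (Fin (K + 1) × Fin d) ℂ :=
      Matrix.of fun p q =>
        if p.1 = q.1 then (if p.2 = q.2 then 1 else 0)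
        else if (p.1 : ℕ) = (q.1 : ℕ) + 1 then -(M (p.1 : ℕ)) p.2 q.2
        else 0
    IsUnit L ∧ ‖L‖ ≤ 3 ∧ ‖L⁻¹‖ ≤ (K : ℝ) + 1 ∧
      ‖L‖ * ‖L⁻¹‖ ≤ 3 * ((K : ℝ) + 1) := by
  intro L
  set N := Matrix.blockShift (K := K + 1) M
  have hL : L = 1 - N := by
    ext ⟨i, a⟩ ⟨j, b⟩
    simp only [L, N, Matrix.blockShift, Matrix.of_apply, Matrix.sub_apply, Matrix.one_apply,
      Prod.mk.injEq]
    split_ifs <;> simp_all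
  have hN : ‖N‖ ≤ 1 := Matrix.norm_blockShift_le_one hM
  have hL_norm : ‖L‖ ≤ 3 := by
    rw [hL]
    linarith [norm_sub_le 1 N, Matrix.l2_opNorm_one_le (𝕜 := ℂ) (n := Fin (K + 1) × Fin d)]
  have hL_inv : ‖L⁻¹‖ ≤ (K : ℝ) + 1 := by
    rw [hL, Matrix.inv_one_sub_eq_geom_sum (Matrix.blockShift_pow_eq_zero M)]
    exact_mod_cast norm_geom_sum_le_of_norm_le_one Matrix.l2_opNorm_one_le hN (K + 1)
  exact ⟨hL ▸ IsNilpotent.isUnit_one_sub ⟨K + 1, Matrix.blockShift_pow_eq_zero M⟩,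
    hL_norm, hL_inv, mul_le_mul hL_norm hL_inv (norm_nonneg _) (by norm_num)⟩

/-- Let `L = Σ_{k=0}^{K} |k⟩⟨k| ⊗ I − Σ_{k=1}^{K} |k⟩⟨k−1| ⊗ M_k` be block lower
bidiagonal with `d×d` blocks, where each `M_k` has spectral norm at most `1`. Then
`L` is invertible, `‖L‖ ≤ 3`, `‖L⁻¹‖ ≤ K + 1`, and so `κ(L) = ‖L‖‖L⁻¹‖ ≤ 3(K+1)`. -/
theorem block_bidiagonal_condition_number (K d : ℕ) (hK : 1 ≤ K) (hd : 1 ≤ d)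
    (M : ℕ → Matrix (Fin d) (Fin d) ℂ) (hM : ∀ k, ‖M k‖ ≤ 1) :
    let L : Matrix (Fin (K + 1) × Fin d) (Fin (K + 1) × Fin d) ℂ :=
      Matrix.of fun p q =>
        if p.1 = q.1 then (if p.2 = q.2 then 1 else 0)
        else if (p.1 : ℕ) = (q.1 : ℕ) + 1 then -(M (p.1 : ℕ)) p.2 q.2
        else 0
    IsUnit L ∧ ‖L‖ ≤ 3 ∧ ‖L⁻¹‖ ≤ (K : ℝ) + 1 ∧
      ‖L‖ * ‖L⁻¹‖ ≤ 3 * ((K : ℝ) + 1) :=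
  block_bidiagonal_condition_number_general K d M hM
end
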